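/- Causal quotient rule: if f, g : ℝ^ω → ℝ^ω are causally differentiable at σ and g(σ)_0 ≠ 0, then f/g := f × g^{-1} is causally differentiable at σ with derivative Δσ ↦ (D f(σ)(Δσ) × g(σ) + [-1] × f(σ) × D g(σ)(Δσ)) × (g(σ) × g(σ))^{-1}. -/

import Mathlib

/-- A stream function is *causal* if initial segments of length `k+1` of the
input determine initial segments of length `k+1` of the output. -/
def Causal {A B : Type*} (f : (ℕ → A) → (ℕ → B)) : Prop :=
  ∀ σ τ : ℕ → A, ∀ k : ℕ, (∀ i ≤ k, σ i = τ i) → ∀ i ≤ k, f σ i = f τ i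

/-- Extend a finite word to a stream (padding with the first letter). -/
def extW {A : Type*} {k : ℕ} (w : Fin (k+1) → A) : ℕ → A :=
  fun n => if h : n < k+1 then w ⟨n, h⟩ else w 0

/-- The `k`-th pointwise approximant (unrolling) of a causal function. -/
def U {A B : Type*} (f : (ℕ → A) → (ℕ → B)) (k : ℕ) (w : Fin (k+1) → A) : B :=
  f (extW w) k

/-- The `k`-th stringwise approximant (truncation) of a causal function. -/
def T {A B : Type*} (f : (ℕ → A) → (ℕ → B)) (k : ℕ) (w : Fin (k+1) → A) :
    Fin (k+1) → B := fun i => f (extW w) i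

/-- The initial segment `σ_{0:k}` of a stream, as a finite word. -/
def init {A : Type*} (σ : ℕ → A) (k : ℕ) : Fin (k+1) → A := fun i => σ i

/-- A causal function is differentiable at a stream `σ` when all of its
pointwise approximants are differentiable at `σ_{0:k}`. -/
def CausalDiffAt {E F : Type*} [NormedAddCommGroup E] [NormedSpace ℝ E]
    [NormedAddCommGroup F] [NormedSpace ℝ F]
    (f : (ℕ → E) → ℕ → F) (σ : ℕ → E) : Prop :=
  ∀ k, DifferentiableAt ℝ (U f k) (init σ k)

/-- `L` is the causal derivative of `f` at `σ`: the `k`-th pointwise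
approximant of `L` is the Jacobian of `U_k(f)` at `σ_{0:k}`. -/
def IsCausalDerivAt {E F : Type*} [NormedAddCommGroup E] [NormedSpace ℝ E]
    [NormedAddCommGroup F] [NormedSpace ℝ F]
    (f : (ℕ → E) → ℕ → F) (σ : ℕ → E) (L : (ℕ → E) → ℕ → F) : Prop :=
  ∀ (Δ : ℕ → E) (k : ℕ), L Δ k = fderiv ℝ (U f k) (init σ k) (init Δ k)

/-- The Cauchy product of two real streams. -/
def cauchy (σ τ : ℕ → ℝ) : ℕ → ℝ :=
  fun k => ∑ i ∈ Finset.range (k+1), σ i * τ (k - i)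

/-- The constant stream `[r] = (r, 0, 0, ...)`. -/
def streamConst (r : ℝ) : ℕ → ℝ := fun k => if k = 0 then r else 0

/-- The stream inverse for the Cauchy product, defined when `σ 0 ≠ 0`. -/
noncomputable def sinv (σ : ℕ → ℝ) : ℕ → ℝ
  | 0 => 1 / σ 0
  | k+1 => -(1 / σ 0) * ∑ i : Fin (k+1), σ (k + 1 - (i : ℕ)) * sinv σ i


/-!
Identify streams with formal power series, so that `cauchy` is multiplication and `sinv` is
inversion. The quotient `q = f × g⁻¹` is causal, and its approximants are built from those of `f`
and `g` by sums, products and division by the head of `g`, so `q` is causally differentiable.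
Near `σ` the head of `g` stays nonzero, so `q × g = f` there; the causal product rule then gives
`D f = D q × g + q × D g`, and solving this linear equation for `D q` in the ring of power series
yields the quotient formula.
-/

open Finset Filter Topology PowerSeries

section Algebra

theorem cauchy_congr {a a' b b' : ℕ → ℝ} {k : ℕ} (ha : ∀ i ≤ k, a i = a' i)
    (hb : ∀ i ≤ k, b i = b' i) : ∀ i ≤ k, cauchy a b i = cauchy a' b' i := by
  intro i hi
  refine sum_congr rfl fun j hj => ?_
  rw [mem_range] at hj
  rw [ha j (by omega), hb (i - j) (by omega)]

theorem sinv_congr {a a' : ℕ → ℝ} {k : ℕ} (h : ∀ i ≤ k, a i = a' i) :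
    ∀ i ≤ k, sinv a i = sinv a' i := by
  intro i
  induction i using Nat.strong_induction_on with
  | _ i ih =>
    intro hi
    cases i with
    | zero => simp only [sinv, h 0 hi]
    | succ n =>
      simp only [sinv, h 0 (Nat.zero_le k)]
      congr 1
      refine Fintype.sum_congr _ _ fun j => ?_
      rw [h _ (by omega), ih j (by omega) (by omega)]

theorem PowerSeries.mk_injective {R : Type*} [Semiring R] :
    Function.Injective (mk : (ℕ → R) → R⟦X⟧) :=
  fun a b h => funext fun n => by simpa using congrArg (coeff n) h

theorem PowerSeries.mk_add {R : Type*} [Semiring R] (a b : ℕ → R) :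
    mk (a + b) = mk a + mk b := by
  ext n
  simp

theorem mk_cauchy (a b : ℕ → ℝ) : mk (cauchy a b) = mk a * mk b := by
  ext n
  rw [coeff_mul, Finset.Nat.sum_antidiagonal_eq_sum_range_succ_mk]
  simp [cauchy]

theorem mk_streamConst (r : ℝ) : mk (streamConst r) = C r := by
  ext n
  simp [streamConst, coeff_C]

theorem mk_mul_mk_sinv {a : ℕ → ℝ} (ha : a 0 ≠ 0) : mk a * mk (sinv a) = 1 := by
  ext n
  cases n with
  | zero => simp [coeff_mul, sinv, ha]
  | succ n =>
    have hrec : ∑ p ∈ antidiagonal n, a (p.1 + 1) * sinv a p.2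
        = ∑ i : Fin (n + 1), a (n + 1 - i) * sinv a i := by
      rw [← Finset.Nat.sum_antidiagonal_swap, Finset.Nat.sum_antidiagonal_eq_sum_range_succ_mk,
        Fin.sum_univ_eq_sum_range (fun i => a (n + 1 - i) * sinv a i)]
      refine sum_congr rfl fun i hi => ?_
      rw [mem_range] at hi
      simp only [Prod.fst_swap, Prod.snd_swap, show n - i + 1 = n + 1 - i by omega]
    rw [coeff_mul, Finset.Nat.sum_antidiagonal_succ]
    simp only [coeff_mk, coeff_one, if_neg n.succ_ne_zero, hrec, sinv]
    field_simp
    ring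

theorem cauchy_sinv_cancel {a b : ℕ → ℝ} (hb : b 0 ≠ 0) : cauchy (cauchy a (sinv b)) b = a := by
  apply mk_injective
  rw [mk_cauchy, mk_cauchy, mul_right_comm, mul_assoc, mk_mul_mk_sinv hb, mul_one]

theorem eq_cauchy_sinv_sq_of_eq_cauchy_add {a b x F G : ℕ → ℝ} (hG : G 0 ≠ 0)
    (h : a = cauchy x G + cauchy (cauchy F (sinv G)) b) :
    x = cauchy (cauchy a G + cauchy (cauchy (streamConst (-1)) F) b) (sinv (cauchy G G)) := by
  have hGG : cauchy G G 0 ≠ 0 := by simpa [cauchy] using mul_ne_zero hG hG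
  have hinv := mk_mul_mk_sinv hG
  have hinv_sq := mk_mul_mk_sinv hGG
  apply mk_injective
  have hmk := congrArg mk h
  simp only [mk_cauchy, mk_add, mk_streamConst, map_neg, map_one] at hinv_sq hmk ⊢
  linear_combination (-(mk G * mk (sinv (cauchy G G)))) * hmk
    - mk F * mk b * mk (sinv (cauchy G G)) * hinv - mk x * hinv_sq

end Algebra

section Differentiability

variable {X : Type*} [NormedAddCommGroup X] [NormedSpace ℝ X] {a b : X → ℕ → ℝ} {x : X}

theorem differentiableAt_cauchy {n : ℕ} (ha : ∀ i ≤ n, DifferentiableAt ℝ (a · i) x)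
    (hb : ∀ i ≤ n, DifferentiableAt ℝ (b · i) x) :
    DifferentiableAt ℝ (fun y => cauchy (a y) (b y) n) x := by
  refine DifferentiableAt.fun_sum fun i hi => ?_
  rw [mem_range] at hi
  exact (ha i (by omega)).mul (hb (n - i) (by omega))

theorem differentiableAt_sinv {n : ℕ} (ha : ∀ i ≤ n, DifferentiableAt ℝ (a · i) x)
    (h0 : a x 0 ≠ 0) : DifferentiableAt ℝ (fun y => sinv (a y) n) x := by
  induction n using Nat.strong_induction_on with
  | _ n ih =>
    have hinv : DifferentiableAt ℝ (fun y => 1 / a y 0) x := by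
      simpa only [one_div] using (ha 0 (Nat.zero_le n)).fun_inv h0
    cases n with
    | zero => simpa only [sinv] using hinv
    | succ m =>
      simp only [sinv]
      refine hinv.neg.mul (DifferentiableAt.fun_sum fun i _ => ?_)
      exact (ha _ (by omega)).mul (ih i (by omega) fun j hj => ha j (by omega))

end Differentiability

section Causal

variable {E : Type*} [NormedAddCommGroup E] [NormedSpace ℝ E]

theorem Causal.apply_extW_init {A B : Type*} {f : (ℕ → A) → ℕ → B} (hf : Causal f) (σ : ℕ → A)
    {k i : ℕ} (hi : i ≤ k) : f (extW (init σ k)) i = f σ i :=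
  hf _ _ k (fun m hm => by simp [extW, init, Nat.lt_succ_of_le hm]) i hi

noncomputable def restrictInit {k j : ℕ} (h : j ≤ k) : (Fin (k + 1) → E) →L[ℝ] (Fin (j + 1) → E) :=
  ContinuousLinearMap.pi fun i => ContinuousLinearMap.proj (Fin.castLE (by omega) i)

@[simp]
theorem restrictInit_init {k j : ℕ} (h : j ≤ k) (σ : ℕ → E) :
    restrictInit h (init σ k) = init σ j :=
  rfl

theorem Causal.apply_extW_eq_U {F : Type*} {f : (ℕ → E) → ℕ → F} (hf : Causal f) {k j : ℕ}
    (h : j ≤ k) : (fun w : Fin (k + 1) → E => f (extW w) j) = U f j ∘ restrictInit h := by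
  funext w
  refine hf _ _ j (fun i hi => ?_) j le_rfl
  simp [extW, restrictInit, show i < k + 1 by omega, show i < j + 1 by omega]

theorem Causal.cauchy {A : Type*} {f g : (ℕ → A) → ℕ → ℝ} (hf : Causal f) (hg : Causal g) :
    Causal (fun ρ => cauchy (f ρ) (g ρ)) :=
  fun σ τ k h => cauchy_congr (hf σ τ k h) (hg σ τ k h)

theorem Causal.sinv {A : Type*} {g : (ℕ → A) → ℕ → ℝ} (hg : Causal g) :
    Causal (fun ρ => sinv (g ρ)) :=
  fun σ τ k h => sinv_congr (hg σ τ k h)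

variable {F : Type*} [NormedAddCommGroup F] [NormedSpace ℝ F] {σ : ℕ → E}

theorem Causal.hasFDerivAt_apply_extW {f : (ℕ → E) → ℕ → F} (hf : Causal f)
    (hdf : CausalDiffAt f σ) {k j : ℕ} (h : j ≤ k) :
    HasFDerivAt (fun w : Fin (k + 1) → E => f (extW w) j)
      ((fderiv ℝ (U f j) (init σ j)).comp (restrictInit h)) (init σ k) := by
  rw [hf.apply_extW_eq_U h]
  exact (hdf j).hasFDerivAt.comp (init σ k) (restrictInit (E := E) h).hasFDerivAt

theorem IsCausalDerivAt.unique {f : (ℕ → E) → ℕ → F} {L L' : (ℕ → E) → ℕ → F}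
    (hL : IsCausalDerivAt f σ L) (hL' : IsCausalDerivAt f σ L') : L = L' :=
  funext fun Δ => funext fun k => (hL Δ k).trans (hL' Δ k).symm

theorem IsCausalDerivAt.congr_of_eventuallyEq {f g : (ℕ → E) → ℕ → F} {L : (ℕ → E) → ℕ → F}
    (hL : IsCausalDerivAt f σ L) (h : ∀ k, U f k =ᶠ[𝓝 (init σ k)] U g k) :
    IsCausalDerivAt g σ L := fun Δ k => by
  rw [hL Δ k, (h k).fderiv_eq]

variable {f g : (ℕ → E) → ℕ → ℝ}

theorem CausalDiffAt.cauchy (hf : Causal f) (hg : Causal g) (hdf : CausalDiffAt f σ)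
    (hdg : CausalDiffAt g σ) : CausalDiffAt (fun ρ => cauchy (f ρ) (g ρ)) σ := fun _ =>
  differentiableAt_cauchy (fun _ hi => (hf.hasFDerivAt_apply_extW hdf hi).differentiableAt)
    (fun _ hi => (hg.hasFDerivAt_apply_extW hdg hi).differentiableAt)

theorem CausalDiffAt.sinv (hg : Causal g) (hdg : CausalDiffAt g σ) (hg0 : g σ 0 ≠ 0) :
    CausalDiffAt (fun ρ => sinv (g ρ)) σ := fun k =>
  differentiableAt_sinv (fun _ hi => (hg.hasFDerivAt_apply_extW hdg hi).differentiableAt)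
    (by rwa [hg.apply_extW_init σ (Nat.zero_le k)])

theorem IsCausalDerivAt.cauchy {Df Dg : (ℕ → E) → ℕ → ℝ} (hf : Causal f) (hg : Causal g)
    (hdf : CausalDiffAt f σ) (hdg : CausalDiffAt g σ) (hDf : IsCausalDerivAt f σ Df)
    (hDg : IsCausalDerivAt g σ Dg) :
    IsCausalDerivAt (fun ρ => cauchy (f ρ) (g ρ)) σ
      (fun Δ => cauchy (Df Δ) (g σ) + cauchy (f σ) (Dg Δ)) := by
  intro Δ k
  have hterm := fun i (hi : i ∈ range (k + 1)) =>
    (hf.hasFDerivAt_apply_extW hdf (Nat.lt_succ_iff.mp (mem_range.mp hi))).fun_mul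
      (hg.hasFDerivAt_apply_extW hdg (j := k - i) (Nat.sub_le k i))
  have hU : U (fun ρ => _root_.cauchy (f ρ) (g ρ)) k =
      fun w => ∑ i ∈ range (k + 1), f (extW w) i * g (extW w) (k - i) := rfl
  rw [hU, fderiv_fun_sum fun i hi => (hterm i hi).differentiableAt, _root_.sum_apply]
  beta_reduce
  rw [Pi.add_apply, _root_.cauchy, _root_.cauchy, ← sum_add_distrib]
  refine sum_congr rfl fun i hi => ?_
  have hik : i ≤ k := Nat.lt_succ_iff.mp (mem_range.mp hi)
  rw [(hterm i hi).fderiv]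
  simp only [add_apply, smul_apply, ContinuousLinearMap.comp_apply, restrictInit_init,
    smul_eq_mul, ← hDf Δ, ← hDg Δ]
  rw [hf.apply_extW_init σ hik, hg.apply_extW_init σ (Nat.sub_le k i)]
  ring

theorem eventuallyEq_U_cauchy_cauchy_sinv (hg : Causal g) (hdg : CausalDiffAt g σ)
    (hg0 : g σ 0 ≠ 0) (k : ℕ) :
    U (fun ρ => cauchy (cauchy (f ρ) (sinv (g ρ))) (g ρ)) k =ᶠ[𝓝 (init σ k)] U f k := by
  have hcont := (hg.hasFDerivAt_apply_extW hdg (Nat.zero_le k)).continuousAt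
  filter_upwards [hcont.eventually_ne (by rwa [hg.apply_extW_init σ (Nat.zero_le k)])] with w hw
  exact congrFun (cauchy_sinv_cancel hw) k

end Causal

/-- Causal quotient rule. -/
theorem causal_quotient_rule (f g : (ℕ → ℝ) → ℕ → ℝ)
    (hf : Causal f) (hg : Causal g) (σ : ℕ → ℝ) (Df Dg : _)
    (hdf : CausalDiffAt f σ) (hdg : CausalDiffAt g σ)
    (hDf : IsCausalDerivAt f σ Df) (hDg : IsCausalDerivAt g σ Dg)
    (hg0 : g σ 0 ≠ 0) :
    CausalDiffAt (fun ρ => cauchy (f ρ) (sinv (g ρ))) σ ∧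
    IsCausalDerivAt (fun ρ => cauchy (f ρ) (sinv (g ρ))) σ (fun Δ =>
      cauchy
        (cauchy (Df Δ) (g σ) +
          cauchy (cauchy (streamConst (-1)) (f σ)) (Dg Δ))
        (sinv (cauchy (g σ) (g σ)))) := by
  set q := fun ρ => cauchy (f ρ) (sinv (g ρ))
  have hq : Causal q := hf.cauchy hg.sinv
  have hdq : CausalDiffAt q σ := .cauchy hf hg.sinv hdf (.sinv hg hdg hg0)
  set Dq : (ℕ → ℝ) → ℕ → ℝ := fun Δ k => fderiv ℝ (U q k) (init σ k) (init Δ k)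
  have hDq : IsCausalDerivAt q σ Dq := fun _ _ => rfl
  have hDf' : IsCausalDerivAt f σ fun Δ => cauchy (Dq Δ) (g σ) + cauchy (q σ) (Dg Δ) :=
    (IsCausalDerivAt.cauchy hq hg hdq hdg hDq hDg).congr_of_eventuallyEq
      (eventuallyEq_U_cauchy_cauchy_sinv hg hdg hg0)
  refine ⟨hdq, fun Δ k => ?_⟩
  have hsolve := eq_cauchy_sinv_sq_of_eq_cauchy_add hg0 (congrFun (hDf.unique hDf') Δ)
  exact (congrFun hsolve k).symm
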